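/- Let V₁, V₂, W₁, W₂ : ℝ → ℝ be four times continuously differentiable with V_i′(0) = W_i′(0) = 0, and set v_{i,1} := V_i″(0), w_{i,1} := W_i″(0). For a sequence u : ℤ → ℝ², u(j) = (u₁(j), u₂(j)), define the nonlinear part of the lattice force by M(u)(j)₁ := V₁′(u₂(j+1) − u₁(j)) − V₁′(u₁(j) − u₂(j)) − W₁′(u₁(j)) − [v_{1,1}(u₂(j+1) − 2u₁(j) + u₂(j)) − w_{1,1}u₁(j)] and M(u)(j)₂ := V₂′(u₁(j) − u₂(j)) − V₂′(u₂(j) − u₁(j−1)) − W₂′(u₂(j)) − [v_{2,1}(u₁(j) − 2u₂(j) + u₁(j−1)) − w_{2,1}u₂(j)]. Then for every c₀ > 0 there exists a constant c_M > 0 (depending only on V_i, W_i and c₀) such that for all square-summable u, ũ : ℤ → ℝ² with sup_{j,i} |u_i(j)| ≤ c₀ and sup_{j,i} |ũ_i(j)| ≤ c₀, one has ( Σ_{j∈ℤ} |M(u)(j) − M(ũ)(j)|² )^{1/2} ≤ c_M (‖u‖_{ℓ^∞} + ‖ũ‖_{ℓ^∞}) ( Σ_{j∈ℤ} |u(j)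 − ũ(j)|² )^{1/2}, where ‖u‖_{ℓ^∞} := sup_{j∈ℤ, i=1,2} |u_i(j)| and |·| denotes the Euclidean norm on ℝ². -/

import Mathlib

/-!
The nonlinear part `x ↦ g x - g'(0) x` of `g = V'` has derivative `g'(t) - g'(0) = O(|t|)` on
bounded sets, because `g'` is `C¹`; by the mean value theorem it is Lipschitz on `[-r, r]` with
constant `O(r)`. With `r = 2 (‖u‖_∞ + ‖ũ‖_∞)`, which bounds every argument occurring in `M(u)` and
`M(ũ)`, each component of `M(u)(j) - M(ũ)(j)` is a sum of three such differences involving only the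
sites `j - 1, j, j + 1`; squaring and summing over `j` counts every site at most three times.
-/

/-- The nonlinear part of the lattice force of the diatomic chain. -/
noncomputable def latticeNonlin (V1 V2 W1 W2 : ℝ → ℝ) (u : ℤ → Fin 2 → ℝ) (j : ℤ) :
    Fin 2 → ℝ :=
  ![deriv V1 (u (j + 1) 1 - u j 0) - deriv V1 (u j 0 - u j 1) - deriv W1 (u j 0) -
      (iteratedDeriv 2 V1 0 * (u (j + 1) 1 - 2 * u j 0 + u j 1) -
        iteratedDeriv 2 W1 0 * u j 0),
    deriv V2 (u j 0 - u j 1) - deriv V2 (u j 1 - u (j - 1) 0) - deriv W2 (u j 1) -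
      (iteratedDeriv 2 V2 0 * (u j 0 - 2 * u j 1 + u (j - 1) 0) -
        iteratedDeriv 2 W2 0 * u j 1)]

open Set Filter
open scoped NNReal

noncomputable def nonlinearPart (g : ℝ → ℝ) (x : ℝ) : ℝ := g x - deriv g 0 * x

theorem abs_nonlinearPart_sub_le {g : ℝ → ℝ} {K : ℝ≥0} {M x y : ℝ} (hg : Differentiable ℝ g)
    (hK : LipschitzOnWith K (deriv g) (Icc (-M) M)) (hx : |x| ≤ M) (hy : |y| ≤ M) :
    |nonlinearPart g x - nonlinearPart g y| ≤ K * M * |x - y| := by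
  have hM : 0 ≤ M := (abs_nonneg x).trans hx
  have h0 : (0 : ℝ) ∈ Icc (-M) M := ⟨neg_nonpos.2 hM, hM⟩
  have hderiv : ∀ t, HasDerivAt (nonlinearPart g) (deriv g t - deriv g 0) t := fun t => by
    have h := (hg t).hasDerivAt.sub ((hasDerivAt_id' t).const_mul (deriv g 0))
    rwa [mul_one] at h
  have hbound : ∀ t ∈ Icc (-M) M, ‖deriv g t - deriv g 0‖ ≤ K * M := fun t ht =>
    calc ‖deriv g t - deriv g 0‖ ≤ K * dist t 0 := hK.dist_le_mul t ht 0 h0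
      _ ≤ K * M := by gcongr; simpa using abs_le.2 ht
  simpa [Real.norm_eq_abs] using (convex_Icc (-M) M).norm_image_sub_le_of_norm_hasDerivWithin_le
    (fun t _ => (hderiv t).hasDerivWithinAt) hbound (abs_le.1 hy) (abs_le.1 hx)

theorem ContDiff.eventually_lipschitzOnWith_deriv {g : ℝ → ℝ} (hg : ContDiff ℝ 2 g) {s : Set ℝ}
    (hs : IsCompact s) : ∀ᶠ K in atTop, LipschitzOnWith K (deriv g) s := by
  obtain ⟨K₀, hK₀⟩ :=
    (hg.deriv' (n := 1)).locallyLipschitz.locallyLipschitzOn.exists_lipschitzOnWith_of_compact hs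
  exact eventually_atTop.2 ⟨K₀, fun K hK => hK₀.weaken hK⟩

theorem ContDiff.eventually_abs_nonlinearPart_deriv_sub_le {V : ℝ → ℝ} (hV : ContDiff ℝ 3 V)
    (R : ℝ) : ∀ᶠ K : ℝ≥0 in atTop, ∀ M x y, M ≤ R → |x| ≤ M → |y| ≤ M →
      |nonlinearPart (deriv V) x - nonlinearPart (deriv V) y| ≤ K * M * |x - y| := by
  have hV' : ContDiff ℝ 2 (deriv V) := hV.deriv' (n := 2)
  filter_upwards [hV'.eventually_lipschitzOnWith_deriv (isCompact_Icc (a := -R) (b := R))]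
    with K hK M x y hMR hx hy
  exact abs_nonlinearPart_sub_le (hV'.differentiable (by norm_num))
    (hK.mono (Icc_subset_Icc (neg_le_neg hMR) hMR)) hx hy

theorem latticeNonlin_zero (V1 V2 W1 W2 : ℝ → ℝ) (u : ℤ → Fin 2 → ℝ) (j : ℤ) :
    latticeNonlin V1 V2 W1 W2 u j 0 = nonlinearPart (deriv V1) (u (j + 1) 1 - u j 0) -
      nonlinearPart (deriv V1) (u j 0 - u j 1) - nonlinearPart (deriv W1) (u j 0) := by
  simp only [latticeNonlin, nonlinearPart, iteratedDeriv_succ, iteratedDeriv_zero,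
    Matrix.cons_val_zero]
  ring

theorem latticeNonlin_one (V1 V2 W1 W2 : ℝ → ℝ) (u : ℤ → Fin 2 → ℝ) (j : ℤ) :
    latticeNonlin V1 V2 W1 W2 u j 1 = nonlinearPart (deriv V2) (u j 0 - u j 1) -
      nonlinearPart (deriv V2) (u j 1 - u (j - 1) 0) - nonlinearPart (deriv W2) (u j 1) := by
  simp only [latticeNonlin, nonlinearPart, iteratedDeriv_succ, iteratedDeriv_zero,
    Matrix.cons_val_one, Matrix.cons_val_zero]
  ring

theorem sq_sub_sub_sub_le {a₁ b₁ c₁ a₂ b₂ c₂ p q r K : ℝ} (ha : |a₁ - a₂| ≤ K * |p - q|)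
    (hb : |b₁ - b₂| ≤ K * |q - r|) (hc : |c₁ - c₂| ≤ K * |q|) :
    ((a₁ - b₁ - c₁) - (a₂ - b₂ - c₂)) ^ 2 ≤ 15 * K ^ 2 * (p ^ 2 + q ^ 2 + r ^ 2) := by
  have hsq : ∀ {x d : ℝ}, |x| ≤ K * |d| → x ^ 2 ≤ K ^ 2 * d ^ 2 := fun h => by
    simpa only [sq_abs, mul_pow] using pow_le_pow_left₀ (abs_nonneg _) h 2
  calc ((a₁ - b₁ - c₁) - (a₂ - b₂ - c₂)) ^ 2 = ((a₁ - a₂) - (b₁ - b₂) - (c₁ - c₂)) ^ 2 := by ring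
    _ ≤ 3 * ((a₁ - a₂) ^ 2 + (b₁ - b₂) ^ 2 + (c₁ - c₂) ^ 2) := by
      nlinarith [sq_nonneg (a₁ - a₂ + (b₁ - b₂)), sq_nonneg (a₁ - a₂ + (c₁ - c₂)),
        sq_nonneg (b₁ - b₂ - (c₁ - c₂))]
    _ ≤ 3 * (K ^ 2 * (p - q) ^ 2 + K ^ 2 * (q - r) ^ 2 + K ^ 2 * q ^ 2) := by
      gcongr <;> exact hsq ‹_›
    _ ≤ 15 * K ^ 2 * (p ^ 2 + q ^ 2 + r ^ 2) := by
      nlinarith [mul_nonneg (sq_nonneg K) (sq_nonneg (p + q)),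
        mul_nonneg (sq_nonneg K) (sq_nonneg (q + r)), mul_nonneg (sq_nonneg K) (sq_nonneg p),
        mul_nonneg (sq_nonneg K) (sq_nonneg r)]

def sqDist (u v : ℤ → Fin 2 → ℝ) (j : ℤ) : ℝ := (u j 0 - v j 0) ^ 2 + (u j 1 - v j 1) ^ 2

theorem sqDist_nonneg (u v : ℤ → Fin 2 → ℝ) (j : ℤ) : 0 ≤ sqDist u v j := by
  unfold sqDist; positivity

theorem summable_sqDist {u v : ℤ → Fin 2 → ℝ}
    (hu : Summable fun j => u j 0 ^ 2 + u j 1 ^ 2) (hv : Summable fun j => v j 0 ^ 2 + v j 1 ^ 2) :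
    Summable (sqDist u v) := by
  refine ((hu.add hv).mul_left 2).of_nonneg_of_le (sqDist_nonneg u v) fun j => ?_
  have h₀ := add_sq_le (a := u j 0) (b := -v j 0)
  have h₁ := add_sq_le (a := u j 1) (b := -v j 1)
  simp only [sqDist, neg_sq, ← sub_eq_add_neg] at h₀ h₁ ⊢
  linarith

theorem sqDist_latticeNonlin_le {V1 V2 W1 W2 : ℝ → ℝ} {K S : ℝ} {u v : ℤ → Fin 2 → ℝ}
    (hN : ∀ F ∈ ({V1, V2, W1, W2} : Set (ℝ → ℝ)), ∀ x y, |x| ≤ 2 * S → |y| ≤ 2 * S →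
      |nonlinearPart (deriv F) x - nonlinearPart (deriv F) y| ≤ K * |x - y|)
    (hu : ∀ j i, |u j i| ≤ S) (hv : ∀ j i, |v j i| ≤ S) (j : ℤ) :
    sqDist (latticeNonlin V1 V2 W1 W2 u) (latticeNonlin V1 V2 W1 W2 v) j ≤
      30 * K ^ 2 * (sqDist u v (j + 1) + sqDist u v j + sqDist u v (j - 1)) := by
  have hS : 0 ≤ S := (abs_nonneg _).trans (hu 0 0)
  have hdiff : ∀ w : ℤ → Fin 2 → ℝ, (∀ j i, |w j i| ≤ S) → ∀ a b i i', |w a i - w b i'| ≤ 2 * S :=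
    fun w hw a b i i' => (abs_sub _ _).trans (by linarith [hw a i, hw b i'])
  have hself : ∀ w : ℤ → Fin 2 → ℝ, (∀ j i, |w j i| ≤ S) → ∀ a i, |w a i| ≤ 2 * S :=
    fun w hw a i => by linarith [hw a i]
  have hN' : ∀ F ∈ ({V1, V2, W1, W2} : Set (ℝ → ℝ)), ∀ a b i i',
      |nonlinearPart (deriv F) (u a i - u b i') - nonlinearPart (deriv F) (v a i - v b i')| ≤
        K * |(u a i - v a i) - (u b i' - v b i')| := fun F hF a b i i' => by
    rw [← sub_sub_sub_comm]
    exact hN F hF _ _ (hdiff u hu a b i i') (hdiff v hv a b i i')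
  have h₀ := sq_sub_sub_sub_le (hN' V1 (by simp) (j + 1) j 1 0) (hN' V1 (by simp) j j 0 1)
    (hN W1 (by simp) _ _ (hself u hu j 0) (hself v hv j 0))
  have h₁ := sq_sub_sub_sub_le (hN' V2 (by simp) j j 0 1) (hN' V2 (by simp) j (j - 1) 1 0)
    (hN W2 (by simp) _ _ (hself u hu j 1) (hself v hv j 1))
  simp only [sqDist, latticeNonlin_zero, latticeNonlin_one] at h₀ h₁ ⊢
  nlinarith [mul_nonneg (sq_nonneg K) (sq_nonneg (u (j + 1) 0 - v (j + 1) 0)),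
    mul_nonneg (sq_nonneg K) (sq_nonneg (u (j - 1) 1 - v (j - 1) 1)),
    mul_nonneg (sq_nonneg K) (sq_nonneg (u j 0 - v j 0)),
    mul_nonneg (sq_nonneg K) (sq_nonneg (u j 1 - v j 1))]

theorem summable_and_tsum_le_of_le_shifts {f Q : ℤ → ℝ} {c : ℝ} (hf : ∀ j, 0 ≤ f j)
    (hQ : Summable Q) (hfQ : ∀ j, f j ≤ c * (Q (j + 1) + Q j + Q (j - 1))) :
    Summable f ∧ ∑' j, f j ≤ 3 * c * ∑' j, Q j := by
  have hQsucc : Summable fun j => Q (j + 1) := (Equiv.addRight 1).summable_iff.2 hQ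
  have hQpred : Summable fun j => Q (j - 1) := (Equiv.subRight 1).summable_iff.2 hQ
  have hg : Summable fun j => c * (Q (j + 1) + Q j + Q (j - 1)) :=
    ((hQsucc.add hQ).add hQpred).mul_left c
  have hsum : Summable f := hg.of_nonneg_of_le hf hfQ
  have hshift_succ : ∑' j, Q (j + 1) = ∑' j, Q j := (Equiv.addRight 1).tsum_eq Q
  have hshift_pred : ∑' j, Q (j - 1) = ∑' j, Q j := (Equiv.subRight 1).tsum_eq Q
  refine ⟨hsum, (hsum.tsum_le_tsum hfQ hg).trans_eq ?_⟩
  rw [tsum_mul_left, (hQsucc.add hQ).tsum_add hQpred, hQsucc.tsum_add hQ, hshift_succ,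
    hshift_pred]
  ring

noncomputable def latticeSupNorm (u : ℤ → Fin 2 → ℝ) : ℝ := ⨆ j, max |u j 0| |u j 1|

theorem abs_le_latticeSupNorm {u : ℤ → Fin 2 → ℝ} {c : ℝ} (hu : ∀ j i, |u j i| ≤ c) (j : ℤ)
    (i : Fin 2) : |u j i| ≤ latticeSupNorm u := by
  have hle : max |u j 0| |u j 1| ≤ latticeSupNorm u :=
    le_ciSup ⟨c, by rintro _ ⟨k, rfl⟩; exact max_le (hu k 0) (hu k 1)⟩ j
  fin_cases i
  exacts [(le_max_left _ _).trans hle, (le_max_right _ _).trans hle]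

theorem latticeSupNorm_nonneg (u : ℤ → Fin 2 → ℝ) : 0 ≤ latticeSupNorm u :=
  Real.iSup_nonneg fun _ => (abs_nonneg _).trans (le_max_left _ _)

theorem latticeSupNorm_le {u : ℤ → Fin 2 → ℝ} {c : ℝ} (hu : ∀ j i, |u j i| ≤ c) :
    latticeSupNorm u ≤ c :=
  ciSup_le fun j => max_le (hu j 0) (hu j 1)

theorem nonlinearity_lipschitz_estimate_general (V1 V2 W1 W2 : ℝ → ℝ)
    (hV1 : ContDiff ℝ 4 V1) (hV2 : ContDiff ℝ 4 V2)
    (hW1 : ContDiff ℝ 4 W1) (hW2 : ContDiff ℝ 4 W2)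
    (c0 : ℝ) :
    ∃ cM > (0 : ℝ), ∀ u v : ℤ → Fin 2 → ℝ,
      Summable (fun j : ℤ => (u j 0) ^ 2 + (u j 1) ^ 2) →
      Summable (fun j : ℤ => (v j 0) ^ 2 + (v j 1) ^ 2) →
      (∀ (j : ℤ) (i : Fin 2), |u j i| ≤ c0) →
      (∀ (j : ℤ) (i : Fin 2), |v j i| ≤ c0) →
      Summable (fun j : ℤ =>
        (latticeNonlin V1 V2 W1 W2 u j 0 - latticeNonlin V1 V2 W1 W2 v j 0) ^ 2 +
        (latticeNonlin V1 V2 W1 W2 u j 1 - latticeNonlin V1 V2 W1 W2 v j 1) ^ 2) ∧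
      Real.sqrt (∑' j : ℤ,
          ((latticeNonlin V1 V2 W1 W2 u j 0 - latticeNonlin V1 V2 W1 W2 v j 0) ^ 2 +
           (latticeNonlin V1 V2 W1 W2 u j 1 - latticeNonlin V1 V2 W1 W2 v j 1) ^ 2)) ≤
        cM * ((⨆ j : ℤ, max |u j 0| |u j 1|) + ⨆ j : ℤ, max |v j 0| |v j 1|) *
          Real.sqrt (∑' j : ℤ, ((u j 0 - v j 0) ^ 2 + (u j 1 - v j 1) ^ 2)) := by
  have hC : ∀ F ∈ ({V1, V2, W1, W2} : Set (ℝ → ℝ)), ContDiff ℝ 3 F := by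
    simp only [mem_insert_iff, mem_singleton_iff, forall_eq_or_imp, forall_eq]
    exact ⟨hV1.of_le (by norm_num), hV2.of_le (by norm_num), hW1.of_le (by norm_num),
      hW2.of_le (by norm_num)⟩
  obtain ⟨K, hK0, hK⟩ := ((eventually_gt_atTop 0).and <| (eventually_all_finite (toFinite _)).2
    fun F hF => (hC F hF).eventually_abs_nonlinearPart_deriv_sub_le (4 * c0)).exists
  refine ⟨20 * K, by positivity, fun u v hu hv hub hvb => ?_⟩
  set S := latticeSupNorm u + latticeSupNorm v
  have hS0 : 0 ≤ S := add_nonneg (latticeSupNorm_nonneg u) (latticeSupNorm_nonneg v)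
  have hS : 2 * S ≤ 4 * c0 := by linarith [latticeSupNorm_le hub, latticeSupNorm_le hvb]
  have huS : ∀ j i, |u j i| ≤ S := fun j i =>
    le_add_of_le_of_nonneg (abs_le_latticeSupNorm hub j i) (latticeSupNorm_nonneg v)
  have hvS : ∀ j i, |v j i| ≤ S := fun j i =>
    le_add_of_nonneg_of_le (latticeSupNorm_nonneg u) (abs_le_latticeSupNorm hvb j i)
  obtain ⟨hsum, htsum⟩ := summable_and_tsum_le_of_le_shifts (sqDist_nonneg _ _)
    (summable_sqDist hu hv)
    (sqDist_latticeNonlin_le (fun F hF x y => hK F hF (2 * S) x y hS) huS hvS)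
  have hQ0 : 0 ≤ ∑' j, sqDist u v j := tsum_nonneg (sqDist_nonneg u v)
  refine ⟨hsum, ?_⟩
  calc _ ≤ √((20 * K * S) ^ 2 * ∑' j, sqDist u v j) := by
        refine Real.sqrt_le_sqrt (htsum.trans ?_)
        nlinarith [mul_nonneg (sq_nonneg ((K : ℝ) * S)) hQ0]
    _ = 20 * K * S * √(∑' j, sqDist u v j) := by
        rw [Real.sqrt_mul' _ hQ0, Real.sqrt_sq (by positivity)]

theorem nonlinearity_lipschitz_estimate (V1 V2 W1 W2 : ℝ → ℝ)
    (hV1 : ContDiff ℝ 4 V1) (hV2 : ContDiff ℝ 4 V2)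
    (hW1 : ContDiff ℝ 4 W1) (hW2 : ContDiff ℝ 4 W2)
    (hV1' : deriv V1 0 = 0) (hV2' : deriv V2 0 = 0)
    (hW1' : deriv W1 0 = 0) (hW2' : deriv W2 0 = 0)
    (c0 : ℝ) (hc0 : c0 > 0) :
    ∃ cM > (0 : ℝ), ∀ u v : ℤ → Fin 2 → ℝ,
      Summable (fun j : ℤ => (u j 0) ^ 2 + (u j 1) ^ 2) →
      Summable (fun j : ℤ => (v j 0) ^ 2 + (v j 1) ^ 2) →
      (∀ (j : ℤ) (i : Fin 2), |u j i| ≤ c0) →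
      (∀ (j : ℤ) (i : Fin 2), |v j i| ≤ c0) →
      Summable (fun j : ℤ =>
        (latticeNonlin V1 V2 W1 W2 u j 0 - latticeNonlin V1 V2 W1 W2 v j 0) ^ 2 +
        (latticeNonlin V1 V2 W1 W2 u j 1 - latticeNonlin V1 V2 W1 W2 v j 1) ^ 2) ∧
      Real.sqrt (∑' j : ℤ,
          ((latticeNonlin V1 V2 W1 W2 u j 0 - latticeNonlin V1 V2 W1 W2 v j 0) ^ 2 +
           (latticeNonlin V1 V2 W1 W2 u j 1 - latticeNonlin V1 V2 W1 W2 v j 1) ^ 2)) ≤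
        cM * ((⨆ j : ℤ, max |u j 0| |u j 1|) + ⨆ j : ℤ, max |v j 0| |v j 1|) *
          Real.sqrt (∑' j : ℤ, ((u j 0 - v j 0) ^ 2 + (u j 1 - v j 1) ^ 2)) :=
  nonlinearity_lipschitz_estimate_general V1 V2 W1 W2 hV1 hV2 hW1 hW2 c0
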